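/- For the ε-metric g_ε on ℝⁿ, the only nonvanishing curvature components in the coordinate frame are R_{i,n-1,i,n-1} = -ε for i = 1,…,n-2 (up to curvature symmetries), and the only nonzero Ricci component is Ric_{n-1,n-1} = -(n-2)ε. -/

import Mathlib

noncomputable section

/-- Partial derivative of a function on `ℝⁿ` in the `a`-th coordinate direction. -/
def pd {N : ℕ} (a : Fin N) (h : (Fin N → ℝ) → ℝ) (x : Fin N → ℝ) : ℝ :=
  deriv (fun t => h (Function.update x a t)) (x a)

/-- The index of the coordinate `x_n` (dimension `n = m+3`). -/
def lastIdx (m : ℕ) : Fin (m + 3) := ⟨m + 2, by omega⟩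

/-- The index of the coordinate `x_{n-1}`. -/
def penIdx (m : ℕ) : Fin (m + 3) := ⟨m + 1, by omega⟩

/-- The ε-metric `g_ε = Σ_{i=1}^{n-2} (dx_i)² - dx_{n-1} dx_n + ε(Σ x_i²)(dx_{n-1})²`. -/
def gEps (m : ℕ) (ε : ℝ) (x : Fin (m + 3) → ℝ) (i j : Fin (m + 3)) : ℝ :=
  if i = j ∧ (i : ℕ) < m + 1 then 1
  else if i = penIdx m ∧ j = penIdx m then
    ε * ∑ k : Fin (m + 3), (if (k : ℕ) < m + 1 then (x k) ^ 2 else 0)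
  else if (i = penIdx m ∧ j = lastIdx m) ∨ (i = lastIdx m ∧ j = penIdx m) then -(1 / 2)
  else 0

/-- Christoffel symbols of the ε-metric: `∇_{∂_i}∂_{n-1} = -2εx_i ∂_n` for spatial `i`,
`∇_{∂_{n-1}}∂_{n-1} = -ε Σ_k x_k ∂_k`, all others zero. -/
def ΓEps (m : ℕ) (ε : ℝ) (x : Fin (m + 3) → ℝ) (k i j : Fin (m + 3)) : ℝ :=
  if (i : ℕ) < m + 1 ∧ j = penIdx m ∧ k = lastIdx m then -(2 * ε * x i)
  else if (j : ℕ) < m + 1 ∧ i = penIdx m ∧ k = lastIdx m then -(2 * ε * x j)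
  else if i = penIdx m ∧ j = penIdx m ∧ (k : ℕ) < m + 1 then -(ε * x k)
  else 0

/-- Component on `∂_l` of `R(∂_i,∂_j)∂_k`, convention `R(X,Y) = ∇_{[X,Y]} - [∇_X, ∇_Y]`. -/
def RopEps (m : ℕ) (ε : ℝ) (x : Fin (m + 3) → ℝ) (i j k l : Fin (m + 3)) : ℝ :=
  -(pd i (fun y => ΓEps m ε y l j k) x - pd j (fun y => ΓEps m ε y l i k) x
    + ∑ s, (ΓEps m ε x l i s * ΓEps m ε x s j k - ΓEps m ε x l j s * ΓEps m ε x s i k))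

/-- The (0,4)-curvature tensor of the ε-metric. -/
def R4Eps (m : ℕ) (ε : ℝ) (x : Fin (m + 3) → ℝ) (i j k h : Fin (m + 3)) : ℝ :=
  ∑ l, RopEps m ε x i j k l * gEps m ε x l h

/-- Ricci tensor `Ric(X,Y) = trace (Z ↦ R(X,Z)Y)` of the ε-metric. -/
def RicEps (m : ℕ) (ε : ℝ) (x : Fin (m + 3) → ℝ) (i j : Fin (m + 3)) : ℝ :=
  ∑ k, RopEps m ε x i k j k

/-- Covariant derivative `(∇_{∂_a} R)(∂_i,∂_j,∂_k,∂_h)` of the (0,4)-curvature tensor. -/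
def covR4Eps (m : ℕ) (ε : ℝ) (x : Fin (m + 3) → ℝ) (a i j k h : Fin (m + 3)) : ℝ :=
  pd a (fun y => R4Eps m ε y i j k h) x
    - ∑ s, (ΓEps m ε x s a i * R4Eps m ε x s j k h + ΓEps m ε x s a j * R4Eps m ε x i s k h
      + ΓEps m ε x s a k * R4Eps m ε x i j s h + ΓEps m ε x s a h * R4Eps m ε x i j k s)

/-- The matrix of the curvature operator `R(u,v)` in the coordinate frame. -/
def RMatEps (m : ℕ) (ε : ℝ) (x : Fin (m + 3) → ℝ) (u v : Fin (m + 3) → ℝ) :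
    Matrix (Fin (m + 3)) (Fin (m + 3)) ℝ :=
  Matrix.of fun l k => ∑ i, ∑ j, u i * v j * RopEps m ε x i j k l

/-- The inner product of tangent vectors with respect to the ε-metric. -/
def gdotEps (m : ℕ) (ε : ℝ) (x : Fin (m + 3) → ℝ) (u v : Fin (m + 3) → ℝ) : ℝ :=
  ∑ i, ∑ j, gEps m ε x i j * u i * v j

@[simp] lemma penIdx_val (m : ℕ) : ((penIdx m : Fin (m+3)) : ℕ) = m + 1 := rfl
@[simp] lemma lastIdx_val (m : ℕ) : ((lastIdx m : Fin (m+3)) : ℕ) = m + 2 := rfl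

lemma pd_const {N : ℕ} (a : Fin N) (c : ℝ) (x : Fin N → ℝ) :
    pd a (fun _ => c) x = 0 := by
  unfold pd; simp

lemma pd_neg_mul {N : ℕ} (a i : Fin N) (c : ℝ) (x : Fin N → ℝ) :
    pd a (fun y => -(c * y i)) x = if a = i then -c else 0 := by
  unfold pd
  rcases eq_or_ne a i with rfl | hne
  · simp only [Function.update_self, if_pos rfl]
    simpa using ((hasDerivAt_id (x a)).const_mul c).neg.deriv
  · rw [if_neg hne]
    have h : ∀ t, Function.update x a t i = x i :=
      fun t => Function.update_of_ne (Ne.symm hne) t x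
    simp only [h]
    exact deriv_const _ _

lemma pdGamma (m : ℕ) (ε : ℝ) (x : Fin (m + 3) → ℝ) (a l j k : Fin (m + 3)) :
    pd a (fun y => ΓEps m ε y l j k) x =
      if (j : ℕ) < m + 1 ∧ k = penIdx m ∧ l = lastIdx m then (if a = j then -(2*ε) else 0)
      else if (k : ℕ) < m + 1 ∧ j = penIdx m ∧ l = lastIdx m then (if a = k then -(2*ε) else 0)
      else if j = penIdx m ∧ k = penIdx m ∧ (l : ℕ) < m + 1 then (if a = l then -ε else 0)
      else 0 := by
  by_cases h1 : (j : ℕ) < m + 1 ∧ k = penIdx m ∧ l = lastIdx m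
  · rw [if_pos h1,
      show (fun y => ΓEps m ε y l j k) = fun y => -(2*ε * y j) from
        funext fun y => by simp [ΓEps, h1], pd_neg_mul]
  · rw [if_neg h1]
    by_cases h2 : (k : ℕ) < m + 1 ∧ j = penIdx m ∧ l = lastIdx m
    · rw [if_pos h2,
        show (fun y => ΓEps m ε y l j k) = fun y => -(2*ε * y k) from
          funext fun y => by simp [ΓEps, h1, h2], pd_neg_mul]
    · rw [if_neg h2]
      by_cases h3 : j = penIdx m ∧ k = penIdx m ∧ (l : ℕ) < m + 1
      · rw [if_pos h3,
          show (fun y => ΓEps m ε y l j k) = fun y => -(ε * y l) from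
            funext fun y => by simp [ΓEps, h1, h2, h3], pd_neg_mul]
      · rw [if_neg h3,
          show (fun y => ΓEps m ε y l j k) = fun _ => (0:ℝ) from
            funext fun y => by rw [ΓEps, if_neg h1, if_neg h2, if_neg h3], pd_const]

set_option maxHeartbeats 1000000 in
lemma gammagamma (m : ℕ) (ε : ℝ) (x : Fin (m + 3) → ℝ) (i j k l s : Fin (m + 3)) :
    ΓEps m ε x l i s * ΓEps m ε x s j k = ΓEps m ε x l j s * ΓEps m ε x s i k := by
  simp only [ΓEps, Fin.ext_iff, penIdx_val, lastIdx_val]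
  split_ifs <;> first | ring1 | (exfalso; omega)

set_option maxHeartbeats 4000000 in
lemma Rop_eq (m : ℕ) (ε : ℝ) (x : Fin (m + 3) → ℝ) (i j k l : Fin (m + 3)) :
    RopEps m ε x i j k l =
      (if (i : ℕ) < m + 1 ∧ j = penIdx m ∧ k = i ∧ l = lastIdx m then 2*ε else 0)
    + (if (j : ℕ) < m + 1 ∧ i = penIdx m ∧ k = j ∧ l = lastIdx m then -(2*ε) else 0)
    + (if (i : ℕ) < m + 1 ∧ j = penIdx m ∧ k = penIdx m ∧ l = i then ε else 0)
    + (if (j : ℕ) < m + 1 ∧ i = penIdx m ∧ k = penIdx m ∧ l = j then -ε else 0) := by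
  unfold RopEps
  rw [Finset.sum_eq_zero (fun s _ => by rw [gammagamma, sub_self]), pdGamma, pdGamma]
  simp only [Fin.ext_iff, penIdx_val, lastIdx_val, true_and, and_true, false_and, and_false, or_false, false_or]
  split_ifs <;> first | ring1 | (exfalso; omega)

lemma g_last (m : ℕ) (ε : ℝ) (x : Fin (m + 3) → ℝ) (h : Fin (m + 3)) :
    gEps m ε x (lastIdx m) h = if h = penIdx m then -(1/2) else 0 := by
  simp only [gEps, Fin.ext_iff, penIdx_val, lastIdx_val, true_and, and_true, false_and, and_false, or_false, false_or]
  split_ifs <;> first | rfl | (exfalso; omega)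

lemma g_spatial (m : ℕ) (ε : ℝ) (x : Fin (m + 3) → ℝ) (c h : Fin (m + 3))
    (hc : (c : ℕ) < m + 1) :
    gEps m ε x c h = if h = c then 1 else 0 := by
  simp only [gEps, Fin.ext_iff, penIdx_val, lastIdx_val, true_and, and_true, false_and, and_false, or_false, false_or]
  split_ifs <;> first | rfl | (exfalso; omega)

lemma sum_aux {N : ℕ} (A B C : Prop) [Decidable A] [Decidable B] [Decidable C]
    (c : Fin N) (v : ℝ) (w : Fin N → ℝ) :
    (∑ l, (if A ∧ B ∧ C ∧ l = c then v else 0) * w l) = if A ∧ B ∧ C then v * w c else 0 := by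
  by_cases hA : A <;> by_cases hB : B <;> by_cases hC : C <;>
    simp [hA, hB, hC, ite_mul, Finset.sum_ite_eq']

lemma R4_eq (m : ℕ) (ε : ℝ) (x : Fin (m + 3) → ℝ) (i j k h : Fin (m + 3)) :
    R4Eps m ε x i j k h =
      (if (i : ℕ) < m + 1 ∧ j = penIdx m ∧ k = i ∧ h = penIdx m then -ε else 0)
    + (if (j : ℕ) < m + 1 ∧ i = penIdx m ∧ k = j ∧ h = penIdx m then ε else 0)
    + (if (i : ℕ) < m + 1 ∧ j = penIdx m ∧ k = penIdx m ∧ h = i then ε else 0)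
    + (if (j : ℕ) < m + 1 ∧ i = penIdx m ∧ k = penIdx m ∧ h = j then -ε else 0) := by
  unfold R4Eps
  simp only [Rop_eq, add_mul, Finset.sum_add_distrib, sum_aux]
  rw [g_last]
  have e1 : (if (i : ℕ) < m + 1 ∧ j = penIdx m ∧ k = i then
        2*ε * (if h = penIdx m then -(1/2) else 0) else 0)
      = (if (i : ℕ) < m + 1 ∧ j = penIdx m ∧ k = i ∧ h = penIdx m then -ε else 0) := by
    split_ifs <;> first | ring1 | tauto
  have e2 : (if (j : ℕ) < m + 1 ∧ i = penIdx m ∧ k = j then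
        -(2*ε) * (if h = penIdx m then -(1/2) else 0) else 0)
      = (if (j : ℕ) < m + 1 ∧ i = penIdx m ∧ k = j ∧ h = penIdx m then ε else 0) := by
    split_ifs <;> first | ring1 | tauto
  have e3 : (if (i : ℕ) < m + 1 ∧ j = penIdx m ∧ k = penIdx m then
        ε * gEps m ε x i h else 0)
      = (if (i : ℕ) < m + 1 ∧ j = penIdx m ∧ k = penIdx m ∧ h = i then ε else 0) := by
    by_cases hc : (i : ℕ) < m + 1 ∧ j = penIdx m ∧ k = penIdx m
    · rw [if_pos hc, g_spatial m ε x i h hc.1]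
      split_ifs <;> first | ring1 | tauto
    · rw [if_neg hc, if_neg (fun hh => hc ⟨hh.1, hh.2.1, hh.2.2.1⟩)]
  have e4 : (if (j : ℕ) < m + 1 ∧ i = penIdx m ∧ k = penIdx m then
        -ε * gEps m ε x j h else 0)
      = (if (j : ℕ) < m + 1 ∧ i = penIdx m ∧ k = penIdx m ∧ h = j then -ε else 0) := by
    by_cases hc : (j : ℕ) < m + 1 ∧ i = penIdx m ∧ k = penIdx m
    · rw [if_pos hc, g_spatial m ε x j h hc.1]
      split_ifs <;> first | ring1 | tauto
    · rw [if_neg hc, if_neg (fun hh => hc ⟨hh.1, hh.2.1, hh.2.2.1⟩)]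
  rw [e1, e2, e3, e4]

lemma sum_ite_lt (m : ℕ) (v : ℝ) :
    (∑ k : Fin (m+3), (if (k : ℕ) < m+1 then v else 0)) = ((m : ℝ) + 1) * v := by
  rw [Fin.sum_univ_eq_sum_range (fun k => if k < m+1 then v else 0) (m+3),
    Finset.sum_range_succ, Finset.sum_range_succ,
    Finset.sum_congr rfl (fun k hk => if_pos (Finset.mem_range.1 hk))]
  simp [Finset.sum_const, Finset.card_range]

/-- the only nonvanishing curvature components of `g_ε` are
`R_{i,n-1,i,n-1} = -ε` for `i = 1,…,n-2` (up to curvature symmetries), and the only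
nonzero Ricci component is `Ric_{n-1,n-1} = -(n-2)ε`. -/
theorem eps_curvature_and_ricci (m : ℕ) (ε : ℝ) (hε : ε = 1 ∨ ε = -1) :
    ∀ x : Fin (m + 3) → ℝ,
      (∀ i : Fin (m + 3), (i : ℕ) < m + 1 →
        R4Eps m ε x i (penIdx m) i (penIdx m) = -ε) ∧
      (∀ i j k h : Fin (m + 3),
        ¬ (((i : ℕ) < m + 1 ∧ k = i ∧ j = penIdx m ∧ h = penIdx m) ∨
           ((j : ℕ) < m + 1 ∧ h = j ∧ i = penIdx m ∧ k = penIdx m) ∨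
           ((i : ℕ) < m + 1 ∧ h = i ∧ j = penIdx m ∧ k = penIdx m) ∨
           ((j : ℕ) < m + 1 ∧ k = j ∧ i = penIdx m ∧ h = penIdx m)) →
        R4Eps m ε x i j k h = 0) ∧
      (∀ i j : Fin (m + 3),
        RicEps m ε x i j =
          if i = penIdx m ∧ j = penIdx m then -(((m : ℝ) + 1) * ε) else 0) := by
  intro x
  refine ⟨?_, ?_, ?_⟩
  · intro i hi
    rw [R4_eq, if_pos ⟨hi, rfl, rfl, rfl⟩,
      if_neg (by rintro ⟨h2, -⟩; simp at h2),
      if_neg (by rintro ⟨hlt, -, hkp, -⟩; rw [hkp] at hlt; simp at hlt),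
      if_neg (by rintro ⟨h4, -⟩; simp at h4)]
    ring
  · intro i j k h hnot
    rw [R4_eq,
      if_neg (fun hc => hnot (Or.inl ⟨hc.1, hc.2.2.1, hc.2.1, hc.2.2.2⟩)),
      if_neg (fun hc => hnot (Or.inr (Or.inr (Or.inr ⟨hc.1, hc.2.2.1, hc.2.1, hc.2.2.2⟩)))),
      if_neg (fun hc => hnot (Or.inr (Or.inr (Or.inl ⟨hc.1, hc.2.2.2, hc.2.1, hc.2.2.1⟩)))),
      if_neg (fun hc => hnot (Or.inr (Or.inl ⟨hc.1, hc.2.2.2, hc.2.1, hc.2.2.1⟩)))]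
    ring
  · intro i j
    unfold RicEps
    simp only [Rop_eq, Finset.sum_add_distrib]
    rw [Finset.sum_eq_zero (fun k _ => if_neg (by
        rintro ⟨-, rfl, -, hkl⟩
        have := congrArg Fin.val hkl
        simp at this)),
      Finset.sum_eq_zero (fun k _ => if_neg (by
        rintro ⟨hk, -, -, rfl⟩
        simp at hk)),
      Finset.sum_eq_zero (fun k _ => if_neg (by
        rintro ⟨hi, rfl, -, hki⟩
        have := congrArg Fin.val hki
        simp at this
        omega))]
    by_cases hij : i = penIdx m ∧ j = penIdx m
    · rw [if_pos hij]
      have key : ∀ k : Fin (m+3),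
          (if (k : ℕ) < m + 1 ∧ i = penIdx m ∧ j = penIdx m ∧ True then -ε else 0)
          = (if (k : ℕ) < m + 1 then -ε else 0) := by
        intro k
        simp [hij.1, hij.2]
      rw [Finset.sum_congr rfl (fun k _ => key k), sum_ite_lt]
      ring
    · rw [if_neg hij,
        Finset.sum_eq_zero (fun k _ => if_neg (fun hc => hij ⟨hc.2.1, hc.2.2.1⟩))]
      ring
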